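/- Let W₁, W₂, W₃ : ℝ → ℝ be twice continuously differentiable and satisfy (W₂² − W₁²)' + W₂'' + W₁'' = 0 and (W₃² − W₂²)' + W₃'' + W₂'' = 0 identically on ℝ. Then the Hamiltonian H of the model commutes with the parasupercharge Q: for every three times continuously differentiable f = (f₃, f₂, f₁, f₀) : ℝ → ℝ⁴, Q(Hf) = H(Qf). -/

import Mathlib

/-!
Component `k + 1` of `Q` is the first-order operator `-d/dx + Wₖ₊₁` applied to component `k`,
and `H` is diagonal with Schrödinger operators `-½ d² + Vⱼ`, where `Vⱼ = (W₁² + W₂² + W₃² + Uⱼ)/6`.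
A direct computation shows that `-d/dx + W` intertwines `-½ d² + P` with `-½ d² + Q` as soon as
`P - Q = W'` and `P' = ½ W'' + W W'`. For consecutive potentials the first condition holds
identically (`Uⱼ - Uⱼ₊₁ = 6 Wⱼ₊₁'`), and the second is a linear combination of the two
constraints on the superpotentials.
-/

/-- The parasupercharge `Q` of the p=3 model: it acts on 4-component functions
`f = (f₃, f₂, f₁, f₀)` (indexed so that `f 0 = f₃`, ..., `f 3 = f₀`) by
`Qf = (0, −f₃' + W₁f₃, −f₂' + W₂f₂, −f₁' + W₃f₁)`. -/
noncomputable def Qop (W₁ W₂ W₃ : ℝ → ℝ) (f : Fin 4 → ℝ → ℝ) : Fin 4 → ℝ → ℝ :=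
  ![0, -deriv (f 0) + W₁ * f 0, -deriv (f 1) + W₂ * f 1, -deriv (f 2) + W₃ * f 2]

/-- The diagonal potential terms `U₁, U₂, U₃, U₄` of the model Hamiltonian. -/
noncomputable def Uop (W₁ W₂ W₃ : ℝ → ℝ) : Fin 4 → ℝ → ℝ :=
  ![5 * deriv W₁ + 3 * deriv W₂ + deriv W₃,
    -deriv W₁ + 3 * deriv W₂ + deriv W₃,
    -deriv W₁ - 3 * deriv W₂ + deriv W₃,
    -deriv W₁ - 3 * deriv W₂ - 5 * deriv W₃]

/-- The model Hamiltonian: `(Hf)ⱼ = −½fⱼ'' + (1/6)(W₁² + W₂² + W₃²)fⱼ + (1/6)Uⱼfⱼ`. -/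
noncomputable def Hop (W₁ W₂ W₃ : ℝ → ℝ) (f : Fin 4 → ℝ → ℝ) : Fin 4 → ℝ → ℝ :=
  fun j => -(1 / 2 : ℝ → ℝ) * deriv (deriv (f j))
    + (1 / 6 : ℝ → ℝ) * (W₁ ^ 2 + W₂ ^ 2 + W₃ ^ 2) * f j
    + (1 / 6 : ℝ → ℝ) * Uop W₁ W₂ W₃ j * f j

noncomputable def schrodinger (P g : ℝ → ℝ) : ℝ → ℝ :=
  fun x => -(1 / 2) * deriv (deriv g) x + P x * g x

noncomputable def intertwiner (W g : ℝ → ℝ) : ℝ → ℝ :=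
  fun x => -deriv g x + W x * g x

lemma schrodinger_zero (P : ℝ → ℝ) : schrodinger P 0 = 0 := by
  funext x
  simp [schrodinger]

lemma deriv_sq_sub_sq {V W : ℝ → ℝ} {x : ℝ} (hV : DifferentiableAt ℝ V x)
    (hW : DifferentiableAt ℝ W x) :
    deriv (fun y => V y ^ 2 - W y ^ 2) x = 2 * V x * deriv V x - 2 * W x * deriv W x := by
  rw [((hV.hasDerivAt.fun_pow 2).fun_sub (hW.hasDerivAt.fun_pow 2)).deriv]
  push_cast
  ring

/-- The hypotheses on `P` and `Q` are the derivative form of `P, Q = ½ (W² ± W') + c`. -/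
lemma intertwiner_schrodinger {W P Q g : ℝ → ℝ} (hW : ContDiff ℝ 2 W) (hP : Differentiable ℝ P)
    (hg : ContDiff ℝ 3 g)
    (hPQ : ∀ x, P x - Q x = deriv W x)
    (hP' : ∀ x, deriv P x = 1 / 2 * deriv (deriv W) x + W x * deriv W x) :
    intertwiner W (schrodinger P g) = schrodinger Q (intertwiner W g) := by
  funext x
  have hW' : Differentiable ℝ (deriv W) := hW.differentiable_deriv_two
  replace hW : Differentiable ℝ W := hW.differentiable two_ne_zero
  have hg'' : Differentiable ℝ (deriv (deriv g)) := by fun_prop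
  have hg' : Differentiable ℝ (deriv g) := (hg.deriv' (n := 2)).differentiable two_ne_zero
  replace hg : Differentiable ℝ g := hg.differentiable three_ne_zero
  have hAg : deriv (intertwiner W g) =
      fun y => -deriv (deriv g) y + (deriv W y * g y + W y * deriv g y) :=
    funext fun y => ((hg' y).hasDerivAt.neg.add ((hW y).hasDerivAt.mul (hg y).hasDerivAt)).deriv
  have hAg' : deriv (deriv (intertwiner W g)) x = -deriv (deriv (deriv g)) x
      + (deriv (deriv W) x * g x + deriv W x * deriv g x
        + (deriv W x * deriv g x + W x * deriv (deriv g) x)) := by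
    rw [hAg]
    exact ((hg'' x).hasDerivAt.neg.add (((hW' x).hasDerivAt.mul (hg x).hasDerivAt).add
      ((hW x).hasDerivAt.mul (hg' x).hasDerivAt))).deriv
  have hHg : deriv (schrodinger P g) x =
      -(1 / 2) * deriv (deriv (deriv g)) x + (deriv P x * g x + P x * deriv g x) :=
    (((hg'' x).hasDerivAt.const_mul _).add ((hP x).hasDerivAt.mul (hg x).hasDerivAt)).deriv
  unfold intertwiner at hAg' ⊢
  rw [schrodinger, schrodinger, hAg', hHg]
  linear_combination (-g x) * hP' x + (W x * g x - deriv g x) * hPQ x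

noncomputable def potential (W₁ W₂ W₃ : ℝ → ℝ) (j : Fin 4) : ℝ → ℝ :=
  fun x => (W₁ x ^ 2 + W₂ x ^ 2 + W₃ x ^ 2) / 6 + Uop W₁ W₂ W₃ j x / 6

section Model

variable {W₁ W₂ W₃ : ℝ → ℝ}

lemma Hop_eq_schrodinger (f : Fin 4 → ℝ → ℝ) (j : Fin 4) :
    Hop W₁ W₂ W₃ f j = schrodinger (potential W₁ W₂ W₃ j) (f j) := by
  funext x
  simp only [Hop, schrodinger, potential, Pi.add_apply, Pi.mul_apply, Pi.neg_apply,
    Pi.div_apply, Pi.ofNat_apply, Pi.pow_apply]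
  ring

lemma Qop_zero (f : Fin 4 → ℝ → ℝ) : Qop W₁ W₂ W₃ f 0 = 0 := rfl

lemma Qop_succ (f : Fin 4 → ℝ → ℝ) (i : Fin 3) :
    Qop W₁ W₂ W₃ f i.succ = intertwiner (![W₁, W₂, W₃] i) (f i.castSucc) := by
  fin_cases i <;> rfl

lemma Uop_apply (j : Fin 4) (x : ℝ) :
    Uop W₁ W₂ W₃ j x = ![5, -1, -1, -1] j * deriv W₁ x + ![3, 3, -3, -3] j * deriv W₂ x
      + ![1, 1, 1, -5] j * deriv W₃ x := by
  fin_cases j <;>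
    simp only [Uop, Fin.isValue, Fin.zero_eta, Fin.mk_one, Fin.reduceFinMk, Matrix.cons_val,
      Pi.add_apply, Pi.sub_apply, Pi.mul_apply, Pi.neg_apply, Pi.ofNat_apply] <;>
    ring

lemma potential_castSucc_sub_succ (i : Fin 3) (x : ℝ) :
    potential W₁ W₂ W₃ i.castSucc x - potential W₁ W₂ W₃ i.succ x
      = deriv (![W₁, W₂, W₃] i) x := by
  fin_cases i <;>
    simp only [potential, Uop_apply, Fin.isValue, Fin.zero_eta, Fin.mk_one, Fin.reduceFinMk,
      Matrix.cons_val, Fin.castSucc_zero, Fin.castSucc_one, Fin.reduceCastSucc,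
      Fin.succ_zero_eq_one, Fin.succ_one_eq_two, Fin.reduceSucc] <;>
    ring

lemma hasDerivAt_potential (hW₁ : ContDiff ℝ 2 W₁) (hW₂ : ContDiff ℝ 2 W₂)
    (hW₃ : ContDiff ℝ 2 W₃) (j : Fin 4) (x : ℝ) :
    HasDerivAt (potential W₁ W₂ W₃ j)
      ((W₁ x * deriv W₁ x + W₂ x * deriv W₂ x + W₃ x * deriv W₃ x) / 3
        + (![5, -1, -1, -1] j * deriv (deriv W₁) x + ![3, 3, -3, -3] j * deriv (deriv W₂) x
          + ![1, 1, 1, -5] j * deriv (deriv W₃) x) / 6) x := by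
  have hV : ∀ W : ℝ → ℝ, ContDiff ℝ 2 W → HasDerivAt W (deriv W x) x :=
    fun W hW => (hW.differentiable two_ne_zero x).hasDerivAt
  have hV' : ∀ W : ℝ → ℝ, ContDiff ℝ 2 W → HasDerivAt (deriv W) (deriv (deriv W) x) x :=
    fun W hW => (hW.differentiable_deriv_two x).hasDerivAt
  unfold potential
  simp only [Uop_apply]
  refine (((((((hV _ hW₁).fun_pow 2).fun_add ((hV _ hW₂).fun_pow 2)).fun_add
    ((hV _ hW₃).fun_pow 2)).div_const 6).fun_add
    (((((hV' _ hW₁).const_mul (![5, -1, -1, -1] j)).fun_add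
      ((hV' _ hW₂).const_mul (![3, 3, -3, -3] j))).fun_add
        ((hV' _ hW₃).const_mul (![1, 1, 1, -5] j))).div_const 6))).congr_deriv ?_
  norm_num
  ring

lemma deriv_potential_castSucc (hW₁ : ContDiff ℝ 2 W₁) (hW₂ : ContDiff ℝ 2 W₂)
    (hW₃ : ContDiff ℝ 2 W₃)
    (h1 : ∀ x, deriv (fun y => W₂ y ^ 2 - W₁ y ^ 2) x
      + deriv (deriv W₂) x + deriv (deriv W₁) x = 0)
    (h2 : ∀ x, deriv (fun y => W₃ y ^ 2 - W₂ y ^ 2) x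
      + deriv (deriv W₃) x + deriv (deriv W₂) x = 0) (i : Fin 3) (x : ℝ) :
    deriv (potential W₁ W₂ W₃ i.castSucc) x
      = 1 / 2 * deriv (deriv (![W₁, W₂, W₃] i)) x
        + ![W₁, W₂, W₃] i x * deriv (![W₁, W₂, W₃] i) x := by
  have hd : ∀ W : ℝ → ℝ, ContDiff ℝ 2 W → DifferentiableAt ℝ W x :=
    fun W hW => hW.differentiable two_ne_zero x
  have c1 := h1 x
  have c2 := h2 x
  rw [deriv_sq_sub_sq (hd _ hW₂) (hd _ hW₁)] at c1
  rw [deriv_sq_sub_sq (hd _ hW₃) (hd _ hW₂)] at c2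
  rw [(hasDerivAt_potential hW₁ hW₂ hW₃ _ x).deriv]
  fin_cases i <;>
    simp only [Fin.isValue, Fin.zero_eta, Fin.mk_one, Fin.reduceFinMk, Matrix.cons_val,
      Fin.castSucc_zero, Fin.castSucc_one, Fin.reduceCastSucc]
  · linear_combination (1 / 3) * c1 + (1 / 6) * c2
  · linear_combination (1 / 6) * c2 - (1 / 6) * c1
  · linear_combination (-(1 / 6)) * c1 - (1 / 3) * c2

end Model

/-- If the superpotentials are C² and satisfy
`(W₂² − W₁²)' + W₂'' + W₁'' = 0` and `(W₃² − W₂²)' + W₃'' + W₂'' = 0`, then for every C³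
4-component function `f`, the Hamiltonian commutes with `Q`: `Q(Hf) = H(Qf)`. -/
theorem stmt15 (W₁ W₂ W₃ : ℝ → ℝ)
    (hW₁ : ContDiff ℝ 2 W₁) (hW₂ : ContDiff ℝ 2 W₂) (hW₃ : ContDiff ℝ 2 W₃)
    (h1 : ∀ x, deriv (fun y => W₂ y ^ 2 - W₁ y ^ 2) x
      + deriv (deriv W₂) x + deriv (deriv W₁) x = 0)
    (h2 : ∀ x, deriv (fun y => W₃ y ^ 2 - W₂ y ^ 2) x
      + deriv (deriv W₃) x + deriv (deriv W₂) x = 0)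
    (f : Fin 4 → ℝ → ℝ) (hf : ∀ i, ContDiff ℝ 3 (f i)) :
    Qop W₁ W₂ W₃ (Hop W₁ W₂ W₃ f) = Hop W₁ W₂ W₃ (Qop W₁ W₂ W₃ f) := by
  funext j
  induction j using Fin.cases with
  | zero => rw [Qop_zero, Hop_eq_schrodinger, Qop_zero, schrodinger_zero]
  | succ i =>
    have hW : ContDiff ℝ 2 (![W₁, W₂, W₃] i) := by fin_cases i <;> assumption
    rw [Qop_succ, Hop_eq_schrodinger, Hop_eq_schrodinger, Qop_succ]
    exact intertwiner_schrodinger hW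
      (fun x => (hasDerivAt_potential hW₁ hW₂ hW₃ _ x).differentiableAt) (hf _)
      (potential_castSucc_sub_succ i) (deriv_potential_castSucc hW₁ hW₂ hW₃ h1 h2 i)
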